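/- Joining identity (algebraic core of the Schwinger–Dyson equations): let (V₁, W₁, σ) be a closed D-colored graph with a black vertex w̄₁ : W₁, and let (V₂, W₂, τ) be another closed D-colored graph. Then in the polynomial ring R, Σ_{p : Fin D → Fin N} (pderiv (Sum.inl p) tr_τ) · tr_{σ,w̄₁}(p) = Σ_{v : V₂} tr_{τ ⋆_{(v,w̄₁)} σ}. -/

import Mathlib

open scoped BigOperators

variable {D N : ℕ}

-- The colored gluing `σ ⋆_{(v₁,w₂)} τ` of two closed `D`-colored graphs at the white
-- vertex `v₁` of the first and the black vertex `w₂` of the second: the two vertices are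
-- deleted and the lines touching them are joined pairwise respecting the colors.
open Classical in
noncomputable def glue {V₁ W₁ V₂ W₂ : Type*}
    (σ : Fin D → V₁ ≃ W₁) (τ : Fin D → V₂ ≃ W₂) (v₁ : V₁) (w₂ : W₂) (i : Fin D) :
    ({v : V₁ // v ≠ v₁} ⊕ V₂) ≃ (W₁ ⊕ {w : W₂ // w ≠ w₂}) where
  toFun :=
    Sum.elim (fun v => Sum.inl (σ i v.1))
      (fun v => if h : τ i v = w₂ then Sum.inl (σ i v₁) else Sum.inr ⟨τ i v, h⟩)
  invFun :=
    Sum.elim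
      (fun w => if h : (σ i).symm w = v₁ then Sum.inr ((τ i).symm w₂)
        else Sum.inl ⟨(σ i).symm w, h⟩)
      (fun w => Sum.inr ((τ i).symm w.1))
  left_inv := by
    rintro (⟨v, hv⟩ | v)
    · simp only [Sum.elim_inl]
      rw [dif_neg (by simpa using hv)]
      simp
    · simp only [Sum.elim_inr]
      split_ifs with h
      · simp only [Sum.elim_inl]
        rw [dif_pos (by simp)]
        simp [← h]
      · simp
  right_inv := by
    rintro (w | ⟨w, hw⟩)
    · simp only [Sum.elim_inl]
      split_ifs with h
      · simp only [Sum.elim_inr]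
        rw [dif_pos (by simp), ← h]
        simp
      · simp
    · simp only [Sum.elim_inr, Equiv.apply_symm_apply]
      rw [dif_neg (by simpa using hw)]

/-- The polynomial ring in the tensor entries `T_n` (variables `Sum.inl n`) and their
complex conjugates `T̄_n` (variables `Sum.inr n`). -/
abbrev TensorRing (D N : ℕ) : Type :=
  MvPolynomial ((Fin D → Fin N) ⊕ (Fin D → Fin N)) ℂ

-- The trace invariant of a closed `D`-colored graph, as a polynomial in the tensor entries.
open Classical in
noncomputable def tracePoly {V W : Type*} [Finite V] [Finite W]
    (σ : Fin D → V ≃ W) : TensorRing D N :=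
  letI := Fintype.ofFinite V
  letI := Fintype.ofFinite W
  ∑ a : V → Fin D → Fin N,
    (∏ v, MvPolynomial.X (Sum.inl (a v))) *
      ∏ w, MvPolynomial.X (Sum.inr fun i => a ((σ i).symm w) i)

-- The trace invariant polynomial opened at the black vertex `w₁`: the factor
-- `X (Sum.inr (fun i => a ((σ i).symm w₁) i))` is replaced by the Kronecker delta.
open Classical in
noncomputable def tracePolyBlack {V W : Type*} [Finite V] [Finite W]
    (σ : Fin D → V ≃ W) (w₁ : W) (p : Fin D → Fin N) : TensorRing D N :=
  letI := Fintype.ofFinite V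
  letI := Fintype.ofFinite W
  ∑ a : V → Fin D → Fin N,
    (∏ v, MvPolynomial.X (Sum.inl (a v))) *
      ∏ w, if w = w₁ then ∏ i, (if a ((σ i).symm w) i = p i then (1 : TensorRing D N) else 0)
        else MvPolynomial.X (Sum.inr fun i => a ((σ i).symm w) i)

/-!
Differentiating `tr_τ` in `T_p` deletes one white vertex `v` of `τ` and freezes the multi-index
of its lines at `p`. Summing against `tr_{σ,w̄₁}(p)` sets `p` equal to the multi-index that a
coloring of `σ` reads at `w̄₁`. A coloring of the glued graph is precisely a pair of colorings of
`V₂ \ {v}` and of `V₁`, and under this correspondence the monomials on both sides agree.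
-/

open MvPolynomial Finset

theorem Derivation.leibniz_prod {R A M : Type*} [CommSemiring R] [CommSemiring A]
    [AddCommMonoid M] [Algebra R A] [Module A M] [Module R M] [IsScalarTower R A M]
    {ι : Type*} [DecidableEq ι] (δ : Derivation R A M) (s : Finset ι) (f : ι → A) :
    δ (∏ i ∈ s, f i) = ∑ i ∈ s, (∏ j ∈ s.erase i, f j) • δ (f i) := by
  induction s using Finset.induction_on with
  | empty => simp
  | insert x s hx ih =>
    rw [prod_insert hx, δ.leibniz, ih, sum_insert hx, erase_insert hx, smul_sum, add_comm]
    congr 1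
    refine sum_congr rfl fun i hi => ?_
    rw [erase_insert_of_ne (ne_of_mem_of_not_mem hi hx).symm,
      prod_insert fun h => hx (mem_of_mem_erase h), mul_smul]

theorem Fintype.sum_ite_apply_eq {α β M : Type*} [Fintype α] [DecidableEq α] [Fintype β]
    [DecidableEq β] [AddCommMonoid M] (v : α) (q : β) (F : (α → β) → M) :
    ∑ a : α → β, (if a v = q then F a else 0) =
      ∑ a : {u // u ≠ v} → β, F ((Equiv.funSplitAt v β).symm (q, a)) := by
  rw [← (Equiv.funSplitAt v β).symm.sum_comp, Fintype.sum_prod_type, sum_eq_single q]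
  · simp
  · intro p hp
    simp [hp]

theorem Fintype.sum_mul_sum_ite_eq {ι κ R : Type*} [Fintype ι] [DecidableEq ι] [Fintype κ]
    [NonUnitalNonAssocSemiring R] (f : ι → R) (g : κ → ι) (h : κ → R) :
    ∑ p, f p * ∑ b, (if g b = p then h b else 0) = ∑ b, f (g b) * h b := by
  simp_rw [mul_sum, mul_ite, mul_zero]
  rw [sum_comm]
  simp

theorem Fintype.prod_erase_funSplitAt_symm {α β M : Type*} [Fintype α] [DecidableEq α]
    [CommMonoid M] (g : β → M) (v : α) (q : β) (a : {u // u ≠ v} → β) :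
    ∏ u ∈ univ.erase v, g ((Equiv.funSplitAt v β).symm (q, a) u) = ∏ u, g (a u) := by
  rw [prod_subtype (univ.erase v) (p := (· ≠ v)) (fun u => by simp)]
  exact Fintype.prod_congr _ _ fun u => by simp [u.2]

section TraceInvariants

variable {V W V₁ W₁ V₂ W₂ : Type*}

def blackIndex (σ : Fin D → V ≃ W) (a : V → Fin D → Fin N) (w : W) : Fin D → Fin N :=
  fun i => a ((σ i).symm w) i

theorem tracePoly_eq_sum [Fintype V] [DecidableEq V] [Fintype W] (σ : Fin D → V ≃ W) :
    tracePoly (N := N) σ =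
      ∑ a, (∏ v, X (Sum.inl (a v))) * ∏ w, X (Sum.inr (blackIndex σ a w)) := by
  unfold tracePoly blackIndex
  congr!

-- Classical decidability, to match the test `w = w₁` inside `tracePolyBlack`.
open Classical in
theorem tracePolyBlack_eq_sum [Fintype V] [DecidableEq V] [Fintype W]
    (σ : Fin D → V ≃ W) (w₁ : W) (p : Fin D → Fin N) :
    tracePolyBlack σ w₁ p =
      ∑ a, if blackIndex σ a w₁ = p then
        (∏ v, X (Sum.inl (a v))) * ∏ w ∈ univ.erase w₁, X (Sum.inr (blackIndex σ a w))
        else 0 := by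
  unfold tracePolyBlack
  rw [Subsingleton.elim (Fintype.ofFinite V) ‹_›, Subsingleton.elim (Fintype.ofFinite W) ‹_›]
  congr! 1 with a
  · convert rfl
  · rw [← mul_prod_erase univ _ (mem_univ w₁), if_pos rfl, prod_boole,
      prod_congr rfl fun w hw => if_neg (ne_of_mem_erase hw)]
    simp only [mem_univ, true_implies, funext_iff, blackIndex]
    split_ifs
    · rw [one_mul]
      rfl
    · rw [zero_mul, mul_zero]

theorem pderiv_inl_tracePoly [Fintype V] [DecidableEq V] [Fintype W] (τ : Fin D → V ≃ W)
    (q : Fin D → Fin N) :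
    pderiv (Sum.inl q) (tracePoly τ) =
      ∑ v, ∑ a : {u // u ≠ v} → Fin D → Fin N, (∏ u, X (Sum.inl (a u))) *
        ∏ w, X (Sum.inr (blackIndex τ ((Equiv.funSplitAt v _).symm (q, a)) w)) := by
  classical
  have hconj : ∀ Q : W → Fin D → Fin N,
      pderiv (Sum.inl q) (∏ w, (X (Sum.inr (Q w)) : TensorRing D N)) = 0 := by
    intro Q
    simp [Derivation.leibniz_prod, pderiv_X]
  simp_rw [tracePoly_eq_sum, map_sum, pderiv_mul, hconj, mul_zero, add_zero,
    Derivation.leibniz_prod, pderiv_X, Pi.single_apply, Sum.inl.injEq, smul_eq_mul,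
    mul_ite, mul_one, mul_zero, sum_mul, ite_mul, zero_mul]
  rw [sum_comm]
  refine sum_congr rfl fun v _ => ?_
  rw [Fintype.sum_ite_apply_eq]
  simp only [Fintype.prod_erase_funSplitAt_symm fun x => (X (Sum.inl x) : TensorRing D N)]

theorem blackIndex_glue_inl [DecidableEq V₁] (σ : Fin D → V₁ ≃ W₁) (τ : Fin D → V₂ ≃ W₂)
    (v₁ : V₁) (w₂ : W₂) (a : {v // v ≠ v₁} → Fin D → Fin N) (b : V₂ → Fin D → Fin N)
    (w : W₁) :
    blackIndex (glue σ τ v₁ w₂) (Sum.elim a b) (Sum.inl w) =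
      blackIndex σ ((Equiv.funSplitAt v₁ _).symm (blackIndex τ b w₂, a)) w := by
  funext i
  rw [blackIndex, blackIndex, Equiv.funSplitAt_symm_apply]
  by_cases h : (σ i).symm w = v₁ <;> simp [glue, h, blackIndex]

theorem blackIndex_glue_inr (σ : Fin D → V₁ ≃ W₁) (τ : Fin D → V₂ ≃ W₂)
    (v₁ : V₁) (w₂ : W₂) (a : {v // v ≠ v₁} → Fin D → Fin N) (b : V₂ → Fin D → Fin N)
    (w : {w // w ≠ w₂}) :
    blackIndex (glue σ τ v₁ w₂) (Sum.elim a b) (Sum.inr w) = blackIndex τ b w :=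
  rfl

theorem tracePoly_glue [Fintype V₁] [DecidableEq V₁] [Fintype W₁] [DecidableEq W₁]
    [Fintype V₂] [DecidableEq V₂] [Fintype W₂]
    (τ : Fin D → V₂ ≃ W₂) (σ : Fin D → V₁ ≃ W₁) (v : V₂) (w₁ : W₁) :
    tracePoly (glue τ σ v w₁) =
      ∑ b : V₁ → Fin D → Fin N, ∑ a : {u // u ≠ v} → Fin D → Fin N,
        ((∏ u, X (Sum.inl (a u))) *
          ∏ w, X (Sum.inr (blackIndex τ ((Equiv.funSplitAt v _).symm (blackIndex σ b w₁, a)) w))) *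
        ((∏ u, X (Sum.inl (b u))) * ∏ w ∈ univ.erase w₁, X (Sum.inr (blackIndex σ b w))) := by
  rw [tracePoly_eq_sum, ← (Equiv.sumArrowEquivProdArrow _ _ _).symm.sum_comp, Fintype.sum_prod_type,
    sum_comm]
  refine sum_congr rfl fun b _ => sum_congr rfl fun a _ => ?_
  rw [show (Equiv.sumArrowEquivProdArrow _ _ _).symm (a, b) = Sum.elim a b from rfl,
    Fintype.prod_sum_type, Fintype.prod_sum_type, mul_mul_mul_comm]
  simp only [Sum.elim_inl, Sum.elim_inr, blackIndex_glue_inl, blackIndex_glue_inr]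
  rw [prod_subtype (univ.erase w₁) (p := (· ≠ w₁)) (fun w => by simp)
    fun w => (X (Sum.inr (blackIndex σ b w)) : TensorRing D N)]

end TraceInvariants

theorem joining_identity_general {D N : ℕ}
    {V₁ W₁ V₂ W₂ : Type*} [Fintype V₁] [Fintype W₁] [Fintype V₂] [Fintype W₂]
    (σ : Fin D → V₁ ≃ W₁) (wb₁ : W₁) (τ : Fin D → V₂ ≃ W₂) :
    ∑ p : Fin D → Fin N,
        MvPolynomial.pderiv (Sum.inl p) (tracePoly τ) * tracePolyBlack σ wb₁ p
      = ∑ v : V₂, tracePoly (glue τ σ v wb₁) := by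
  classical
  simp_rw [tracePolyBlack_eq_sum, pderiv_inl_tracePoly, Fintype.sum_mul_sum_ite_eq,
    tracePoly_glue, sum_mul]
  exact sum_comm

/-- **Statement 17.** The joining identity, algebraic core of the Schwinger–Dyson
equations: `Σ_p (∂_{T_p} tr_τ) · tr_{σ,w̄₁}(p) = Σ_{v : V₂} tr_{τ ⋆_{(v,w̄₁)} σ}`. -/
theorem joining_identity {D N : ℕ} (hD : 1 ≤ D) (hN : 1 ≤ N)
    {V₁ W₁ V₂ W₂ : Type*} [Fintype V₁] [Fintype W₁] [Fintype V₂] [Fintype W₂]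
    (σ : Fin D → V₁ ≃ W₁) (wb₁ : W₁) (τ : Fin D → V₂ ≃ W₂) :
    ∑ p : Fin D → Fin N,
        MvPolynomial.pderiv (Sum.inl p) (tracePoly τ) * tracePolyBlack σ wb₁ p
      = ∑ v : V₂, tracePoly (glue τ σ v wb₁) :=
  joining_identity_general σ wb₁ τ
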